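/- Let α be a probability measure on ℕ with α({i}) > 0 for every i ∈ ℕ. Then there exists a measurable map b : [0,1) → ℕ^ℕ such that: (1) the pushforward of Lebesgue measure on [0,1) under b equals the infinite product measure α^ℕ on ℕ^ℕ, and (2) b is a bijection almost surely, i.e. there exist a Borel set E ⊆ [0,1) of full Lebesgue measure and a Borel set F ⊆ ℕ^ℕ of full α^ℕ-measure such that b restricts to a bijection from E onto F. -/

import Mathlib

/-!
By induction on `n`, the points of `[0,1)` whose first `n` digits are `y₀, …, y_{n-1}` form a
half-open interval of length `∏ α{yᵢ}`: the first digit `k` pins down `[ℓ_k, ℓ_{k+1})`, and the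
affine rescaling of that interval onto `[0,1)` carries the remaining digits. All weights lie
below some `m < 1`, so these intervals shrink geometrically and the digit map is injective on
all of `[0,1)`; a measurable injection out of a standard Borel space has Borel range, so
`E = [0,1)` and `F = range b` work.
-/

open MeasureTheory Set

attribute [local instance] MeasureTheory.Measure.Subtype.measureSpace

lemma hasSum_toReal_measure_singleton {Ω : Type*} [MeasurableSpace Ω] [Countable Ω]
    [MeasurableSingletonClass Ω] (μ : Measure Ω) [IsProbabilityMeasure μ] :
    HasSum (fun x => (μ {x}).toReal) 1 := by
  have htsum : ∑' x, μ {x} = 1 := by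
    simpa using Measure.tsum_indicator_apply_singleton μ univ MeasurableSet.univ
  have := ENNReal.hasSum_toReal (f := fun x => μ {x}) (by simp [htsum])
  rwa [← ENNReal.tsum_toReal_eq fun x => measure_ne_top μ {x}, htsum, ENNReal.toReal_one] at this

structure PosProbSeq where
  p : ℕ → ℝ
  pos : ∀ i, 0 < p i
  hasSum : HasSum p 1

namespace PosProbSeq

noncomputable def ofMeasure (α : Measure ℕ) [IsProbabilityMeasure α]
    (hpos : ∀ i, 0 < α {i}) : PosProbSeq where
  p i := (α {i}).toReal
  pos i := ENNReal.toReal_pos (hpos i).ne' (measure_ne_top α {i})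
  hasSum := hasSum_toReal_measure_singleton α

variable (w : PosProbSeq)

def ell (k : ℕ) : ℝ := ∑ i ∈ Finset.range k, w.p i

lemma ell_zero : w.ell 0 = 0 := Finset.sum_range_zero _

lemma ell_succ (k : ℕ) : w.ell (k + 1) = w.ell k + w.p k := Finset.sum_range_succ _ _

lemma ell_nonneg (k : ℕ) : 0 ≤ w.ell k := Finset.sum_nonneg fun i _ => (w.pos i).le

lemma ell_mono : Monotone w.ell :=
  monotone_nat_of_le_succ fun k => by rw [ell_succ]; linarith [w.pos k]

lemma ell_le_one (k : ℕ) : w.ell k ≤ 1 :=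
  sum_le_hasSum _ (fun i _ => (w.pos i).le) w.hasSum

lemma exists_lt_ell {u : ℝ} (hu : u < 1) : ∃ k, u < w.ell (k + 1) :=
  ((w.hasSum.tendsto_sum_nat.eventually (eventually_gt_nhds hu)).exists_forall_of_atTop).imp
    fun _ hk => hk _ (Nat.le_succ _)

lemma exists_lt_one_forall_le : ∃ m < 1, ∀ k, w.p k ≤ m := by
  have hpair {j k : ℕ} (hjk : j ≠ k) : w.p j + w.p k ≤ 1 := by
    simpa [Finset.sum_pair hjk] using sum_le_hasSum {j, k} (fun i _ => (w.pos i).le) w.hasSum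
  refine ⟨max (1 - w.p 0) (1 - w.p 1), max_lt (by linarith [w.pos 0]) (by linarith [w.pos 1]),
    fun k => ?_⟩
  rcases eq_or_ne k 0 with rfl | hk
  · exact le_max_of_le_right (by linarith [hpair zero_ne_one])
  · exact le_max_of_le_left (by linarith [hpair hk.symm])

open Classical in
noncomputable def digit (u : Ico (0 : ℝ) 1) : ℕ := Nat.find (w.exists_lt_ell u.2.2)

lemma digit_eq_iff {u : Ico (0 : ℝ) 1} {k : ℕ} :
    w.digit u = k ↔ u.1 ∈ Ico (w.ell k) (w.ell (k + 1)) := by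
  classical
  rw [digit, Nat.find_eq_iff, mem_Ico, and_comm]
  refine and_congr_left fun _ => ⟨fun h => ?_, fun h j hj => not_lt.2 ?_⟩
  · cases k with
    | zero => rw [w.ell_zero]; exact u.2.1
    | succ j => exact not_lt.1 (h j j.lt_succ_self)
  · exact (w.ell_mono hj).trans h

lemma val_mem_Ico_digit (u : Ico (0 : ℝ) 1) :
    u.1 ∈ Ico (w.ell (w.digit u)) (w.ell (w.digit u + 1)) :=
  w.digit_eq_iff.1 rfl

noncomputable def shift (u : Ico (0 : ℝ) 1) : Ico (0 : ℝ) 1 :=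
  ⟨(u - w.ell (w.digit u)) / w.p (w.digit u), by
    obtain ⟨h₀, h₁⟩ := w.val_mem_Ico_digit u
    rw [ell_succ] at h₁
    have := w.pos (w.digit u)
    exact ⟨div_nonneg (by linarith) this.le, (div_lt_one this).2 (by linarith)⟩⟩

lemma val_eq_ell_add_mul_shift (u : Ico (0 : ℝ) 1) :
    u.1 = w.ell (w.digit u) + w.p (w.digit u) * (w.shift u).1 := by
  rw [shift, mul_div_cancel₀ _ (w.pos _).ne']
  ring

lemma val_mem_Ico_iff_shift_mem_Ico (u : Ico (0 : ℝ) 1) {a c : ℝ} :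
    u.1 ∈ Ico (w.ell (w.digit u) + w.p (w.digit u) * a)
        (w.ell (w.digit u) + w.p (w.digit u) * c) ↔ (w.shift u).1 ∈ Ico a c := by
  have := w.pos (w.digit u)
  rw [w.val_eq_ell_add_mul_shift u]
  simp only [mem_Ico, add_le_add_iff_left, add_lt_add_iff_left, mul_le_mul_iff_right₀ this,
    mul_lt_mul_iff_right₀ this]

lemma digit_eq_and_shift_mem_Ico_iff (u : Ico (0 : ℝ) 1) {k : ℕ} {a c : ℝ} (ha : 0 ≤ a)
    (hc : c ≤ 1) : w.digit u = k ∧ (w.shift u).1 ∈ Ico a c ↔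
      u.1 ∈ Ico (w.ell k + w.p k * a) (w.ell k + w.p k * c) := by
  refine ⟨fun ⟨hk, hs⟩ => hk ▸ (w.val_mem_Ico_iff_shift_mem_Ico u).2 hs, fun hu => ?_⟩
  have hpk := w.pos k
  have hk : w.digit u = k :=
    w.digit_eq_iff.2 ⟨by nlinarith [hu.1], by rw [ell_succ]; nlinarith [hu.2]⟩
  subst hk
  exact ⟨rfl, (w.val_mem_Ico_iff_shift_mem_Ico u).1 hu⟩

noncomputable def digits (u : Ico (0 : ℝ) 1) (n : ℕ) : ℕ := w.digit (w.shift^[n] u)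

lemma digits_zero (u : Ico (0 : ℝ) 1) : w.digits u 0 = w.digit u := rfl

lemma digits_succ (u : Ico (0 : ℝ) 1) (n : ℕ) :
    w.digits u (n + 1) = w.digits (w.shift u) n := by
  rw [digits, digits, Function.iterate_succ_apply]

theorem exists_setOf_digits_eq_preimage_Ico (n : ℕ) (y : Fin n → ℕ) :
    ∃ a, 0 ≤ a ∧ a + ∏ i, w.p (y i) ≤ 1 ∧
      {u | ∀ i : Fin n, w.digits u i = y i} =
        Subtype.val ⁻¹' Ico a (a + ∏ i, w.p (y i)) := by
  induction n with
  | zero => exact ⟨0, le_rfl, by simp, by simp⟩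
  | succ n ih =>
    obtain ⟨a, ha₀, ha₁, hcyl⟩ := ih fun i => y i.succ
    have hk := w.pos (y 0)
    refine ⟨w.ell (y 0) + w.p (y 0) * a, by positivity [w.ell_nonneg (y 0)], ?_, ?_⟩
    · calc w.ell (y 0) + w.p (y 0) * a + ∏ i, w.p (y i)
          = w.ell (y 0) + w.p (y 0) * (a + ∏ i : Fin n, w.p (y i.succ)) := by
            rw [Fin.prod_univ_succ]; ring
        _ ≤ w.ell (y 0 + 1) := by rw [ell_succ]; nlinarith
        _ ≤ 1 := w.ell_le_one _
    · ext u
      have hshift := Set.ext_iff.1 hcyl (w.shift u)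
      simp only [mem_ofPred_eq, mem_preimage] at hshift
      simp only [mem_ofPred_eq, mem_preimage, Fin.forall_fin_succ, Fin.val_zero, digits_zero,
        Fin.val_succ, digits_succ, hshift, Fin.prod_univ_succ, add_assoc, ← mul_add]
      exact w.digit_eq_and_shift_mem_Ico_iff u ha₀ ha₁

theorem volume_setOf_digits_eq (n : ℕ) (y : Fin n → ℕ) :
    volume {u | ∀ i : Fin n, w.digits u i = y i} = ∏ i, ENNReal.ofReal (w.p (y i)) := by
  obtain ⟨a, ha₀, ha₁, hcyl⟩ := w.exists_setOf_digits_eq_preimage_Ico n y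
  rw [hcyl, volume_preimage_coe measurableSet_Ico.nullMeasurableSet measurableSet_Ico,
    inter_eq_left.2 (Ico_subset_Ico ha₀ ha₁), Real.volume_Ico, add_sub_cancel_left,
    ENNReal.ofReal_prod_of_nonneg fun i _ => (w.pos _).le]

theorem digits_injective : Function.Injective w.digits := by
  intro u v huv
  obtain ⟨m, hm, hpm⟩ := w.exists_lt_one_forall_le
  have hdist (n : ℕ) : dist u.1 v.1 < m ^ n := by
    obtain ⟨a, -, -, hcyl⟩ := w.exists_setOf_digits_eq_preimage_Ico n fun i => w.digits u i
    have hu : u ∈ {x | ∀ i : Fin n, w.digits x i = w.digits u i} := fun _ => rfl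
    have hv : v ∈ {x | ∀ i : Fin n, w.digits x i = w.digits u i} := fun _ => by rw [huv]
    rw [hcyl] at hu hv
    calc dist u.1 v.1 < ∏ i : Fin n, w.p (w.digits u i) := by
          rw [Real.dist_eq, abs_sub_lt_iff]
          constructor <;> linarith [hu.1, hu.2, hv.1, hv.2]
      _ ≤ ∏ _i : Fin n, m := Finset.prod_le_prod (fun i _ => (w.pos _).le) fun i _ => hpm _
      _ = m ^ n := by simp
  refine Subtype.ext <| eq_of_forall_dist_le fun ε hε => ?_
  obtain ⟨n, hn⟩ := exists_pow_lt_of_lt_one hε hm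
  exact (hdist n).le.trans hn.le

lemma measurable_digit : Measurable w.digit := by
  classical
  exact measurable_find _ fun k => measurableSet_lt measurable_subtype_coe measurable_const

lemma measurable_shift : Measurable w.shift :=
  ((measurable_subtype_coe.sub ((measurable_from_nat (f := w.ell)).comp w.measurable_digit)).div
    ((measurable_from_nat (f := w.p)).comp w.measurable_digit)).subtype_mk

lemma measurable_digits : Measurable w.digits :=
  measurable_pi_lambda _ fun n => w.measurable_digit.comp (w.measurable_shift.iterate n)

end PosProbSeq

/-- **Digit-expansion isomorphism.** For a probability measure `α` on `ℕ` with all atoms of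
positive mass, there is a measurable map `b : [0,1) → ℕ^ℕ` whose pushforward of Lebesgue
measure on `[0,1)` is the infinite product measure `α^ℕ` (characterized here by its values on
cylinder sets), and which is a bijection between a Borel set of full Lebesgue measure in `[0,1)`
and a Borel set of full `α^ℕ`-measure in `ℕ^ℕ`. -/
theorem digit_expansion_isomorphism (α : Measure ℕ) [IsProbabilityMeasure α]
    (hpos : ∀ i : ℕ, 0 < α {i}) :
    ∃ b : Set.Ico (0 : ℝ) 1 → (ℕ → ℕ),
      Measurable b ∧
      (∀ (n : ℕ) (y : Fin n → ℕ),
        Measure.map b (volume : Measure (Set.Ico (0 : ℝ) 1))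
            {x : ℕ → ℕ | ∀ i : Fin n, x i = y i} = ∏ i, α {y i}) ∧
      ∃ (E : Set (Set.Ico (0 : ℝ) 1)) (F : Set (ℕ → ℕ)),
        MeasurableSet E ∧ MeasurableSet F ∧
        (volume : Measure (Set.Ico (0 : ℝ) 1)) E = 1 ∧
        Measure.map b (volume : Measure (Set.Ico (0 : ℝ) 1)) F = 1 ∧
        Set.BijOn b E F := by
  let w := PosProbSeq.ofMeasure α hpos
  have hb : Measurable w.digits := w.measurable_digits
  have : StandardBorelSpace (Ico (0 : ℝ) 1) := measurableSet_Ico.standardBorel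
  have hemb : MeasurableEmbedding w.digits := hb.measurableEmbedding w.digits_injective
  have hvol : volume (univ : Set (Ico (0 : ℝ) 1)) = 1 := by
    rw [Measure.Subtype.volume_univ measurableSet_Ico.nullMeasurableSet, Real.volume_Ico]
    norm_num
  refine ⟨w.digits, hb, fun n y => ?_, univ, range w.digits, MeasurableSet.univ,
    hemb.measurableSet_range, hvol, ?_, ?_⟩
  · have hcyl : MeasurableSet {x : ℕ → ℕ | ∀ i : Fin n, x i = y i} := by
      simp only [ofPred_forall]
      exact .iInter fun i => measurableSet_eq_fun (measurable_pi_apply _) measurable_const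
    rw [Measure.map_apply hb hcyl, preimage_ofPred_eq, w.volume_setOf_digits_eq]
    exact Finset.prod_congr rfl fun i _ => ENNReal.ofReal_toReal (measure_ne_top _ _)
  · rwa [Measure.map_apply hb hemb.measurableSet_range, preimage_range]
  · simpa using w.digits_injective.injOn.bijOn_image (s := univ)
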